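/- With F_n(m; t) = e^{-t} (t^m / m!) ∑_{k=0}^∞ [(n)_k / (m+1)_k] (t^k / k!), the summation identity ∑_{l=m}^∞ F_n(l; t) = F_{n+1}(m; t) holds for all integers n, all m ≥ 0, and all t ≥ 0. -/

import Mathlib

/-- The Pochhammer symbol `(a)_k = a (a+1) ⋯ (a+k-1)`. -/
noncomputable def poch (a : ℝ) (k : ℕ) : ℝ := ∏ i ∈ Finset.range k, (a + i)

/-- Schütz's function `F_n(m;t) = e^{-t} (t^m/m!) ∑_{k≥0} [(n)_k/(m+1)_k] t^k/k!`. -/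
noncomputable def schuetzF (n : ℤ) (m : ℕ) (t : ℝ) : ℝ :=
  Real.exp (-t) * t ^ m / (m.factorial : ℝ) *
    ∑' k : ℕ, poch (n : ℝ) k / poch ((m : ℝ) + 1) k * t ^ k / (k.factorial : ℝ)

/-!
Write `e^t F_n(l;t) = ∑_k (n)_k t^{l+k} / ((l+k)! k!)`. The double series over `l = m + i` and
`k` converges absolutely for every real `t` (since `|(n)_k| ≤ (|n|+1)^k k!`), so it may be summed
along the diagonals `i + k = j`. On each diagonal the power `t^{m+j}/(m+j)!` factors out and what
remains is `∑_{k ≤ j} (n)_k / k! = (n+1)_j / j!`, which is the `j`-th term of `e^t F_{n+1}(m;t)`.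
-/

open Finset Nat

theorem HasSum.sum_antidiagonal {A α : Type*} [AddCommMonoid A] [HasAntidiagonal A]
    [AddCommMonoid α] [TopologicalSpace α] [ContinuousAdd α] [RegularSpace α]
    {f : A × A → α} {a : α} (h : HasSum f a) :
    HasSum (fun n ↦ ∑ p ∈ antidiagonal n, f p) a :=
  (HasAntidiagonal.sigmaAntidiagonalEquivProd.hasSum_iff.2 h).sigma fun n ↦
    (antidiagonal n).hasSum f

lemma poch_succ_right (a : ℝ) (k : ℕ) : poch a (k + 1) = poch a k * (a + k) :=
  prod_range_succ _ _

lemma poch_succ_left (a : ℝ) (k : ℕ) : poch a (k + 1) = a * poch (a + 1) k := by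
  simp only [poch, prod_range_succ', Nat.cast_add, Nat.cast_one, Nat.cast_zero, add_zero]
  rw [mul_comm]
  congr 1
  exact prod_congr rfl fun i _ ↦ by ring

lemma poch_pos {a : ℝ} (ha : 0 < a) (k : ℕ) : 0 < poch a k :=
  prod_pos fun i _ ↦ by positivity

lemma factorial_mul_poch (m k : ℕ) : (m ! : ℝ) * poch ((m : ℝ) + 1) k = ((m + k)! : ℝ) := by
  induction k with
  | zero => simp [poch]
  | succ k ih =>
    rw [poch_succ_right, ← mul_assoc, ih, ← add_assoc, Nat.factorial_succ]
    push_cast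
    ring

lemma sum_range_poch_div_factorial (a : ℝ) (j : ℕ) :
    ∑ k ∈ range (j + 1), poch a k / k ! = poch (a + 1) j / j ! := by
  induction j with
  | zero => simp [poch]
  | succ j ih =>
    rw [sum_range_succ, ih, poch_succ_left a, poch_succ_right (a + 1) j, Nat.factorial_succ]
    push_cast
    field_simp
    ring

lemma abs_poch_le (a : ℝ) (k : ℕ) : |poch a k| ≤ (|a| + 1) ^ k * k ! := by
  calc |poch a k| = ∏ i ∈ range k, |a + i| := abs_prod _ _
    _ ≤ ∏ i ∈ range k, (|a| + 1) * ((i + 1 : ℕ) : ℝ) := by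
        refine prod_le_prod (fun _ _ ↦ abs_nonneg _) fun i _ ↦ ?_
        have hi : (0 : ℝ) ≤ i := i.cast_nonneg
        calc |a + i| ≤ |a| + i := (abs_add_le _ _).trans_eq (by rw [Nat.abs_cast])
          _ ≤ (|a| + 1) * ((i + 1 : ℕ) : ℝ) := by push_cast; nlinarith [abs_nonneg a]
    _ = (|a| + 1) ^ k * k ! := by
        rw [prod_mul_distrib, prod_const, card_range, ← prod_range_add_one_eq_factorial,
          Nat.cast_prod]

/-- The `k`-th term of `e^t F_a(l;t)`, after `l! (l+1)_k = (l+k)!`. -/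
noncomputable def schuetzTerm (a : ℝ) (l : ℕ) (t : ℝ) (k : ℕ) : ℝ :=
  poch a k * t ^ (l + k) / ((l + k)! * k !)

lemma schuetzF_eq_exp_mul_tsum (n : ℤ) (l : ℕ) (t : ℝ) :
    schuetzF n l t = Real.exp (-t) * ∑' k, schuetzTerm n l t k := by
  rw [schuetzF, mul_div_assoc, mul_assoc, ← tsum_mul_left]
  congr 1
  refine tsum_congr fun k ↦ ?_
  have := (poch_pos (by positivity : (0 : ℝ) < l + 1) k).ne'
  rw [schuetzTerm, ← factorial_mul_poch, pow_add]
  field_simp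

lemma abs_schuetzTerm_le (a : ℝ) (l : ℕ) (t : ℝ) (k : ℕ) :
    |schuetzTerm a l t k| ≤ |t| ^ l / l ! * (((|a| + 1) * |t|) ^ k / k !) := by
  have hfac : (l ! * k ! : ℝ) ≤ (l + k)! := by
    exact_mod_cast Nat.le_of_dvd (factorial_pos _) (factorial_mul_factorial_dvd_factorial_add l k)
  calc |schuetzTerm a l t k| = |poch a k| * |t| ^ (l + k) / ((l + k)! * k !) := by
        have hden : (0 : ℝ) ≤ (l + k)! * k ! := by positivity
        rw [schuetzTerm, abs_div, abs_mul, abs_pow, abs_of_nonneg hden]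
    _ ≤ (|a| + 1) ^ k * k ! * |t| ^ (l + k) / ((l ! * k !) * k !) := by
        gcongr
        exact abs_poch_le a k
    _ = |t| ^ l / l ! * (((|a| + 1) * |t|) ^ k / k !) := by
        rw [mul_pow, pow_add]
        field_simp

lemma summable_schuetzTerm_prod (a : ℝ) (m : ℕ) (t : ℝ) :
    Summable fun p : ℕ × ℕ ↦ schuetzTerm a (m + p.1) t p.2 := by
  have hrow : Summable fun i ↦ |t| ^ (m + i) / (m + i)! :=
    (Real.summable_pow_div_factorial |t|).comp_injective (add_right_injective m)
  have hcol := Real.summable_pow_div_factorial ((|a| + 1) * |t|)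
  refine Summable.of_norm_bounded (hrow.mul_of_nonneg hcol (fun _ ↦ by positivity)
    fun _ ↦ by positivity) fun p ↦ ?_
  exact abs_schuetzTerm_le a (m + p.1) t p.2

lemma sum_antidiagonal_schuetzTerm (a : ℝ) (m : ℕ) (t : ℝ) (j : ℕ) :
    ∑ p ∈ antidiagonal j, schuetzTerm a (m + p.1) t p.2 = schuetzTerm (a + 1) m t j := by
  rw [Nat.antidiagonal_eq_map', sum_map]
  calc ∑ k ∈ range (j + 1), schuetzTerm a (m + (j - k)) t k
      = ∑ k ∈ range (j + 1), t ^ (m + j) / (m + j)! * (poch a k / k !) := by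
        refine sum_congr rfl fun k hk ↦ ?_
        rw [schuetzTerm, show m + (j - k) + k = m + j by grind]
        ring
    _ = schuetzTerm (a + 1) m t j := by
        rw [← mul_sum, sum_range_poch_div_factorial, schuetzTerm]
        ring

theorem tsum_schuetzF_general (n : ℤ) (m : ℕ) (t : ℝ) :
    ∑' i : ℕ, schuetzF n (m + i) t = schuetzF (n + 1) m t := by
  have hsum := summable_schuetzTerm_prod n m t
  calc ∑' i : ℕ, schuetzF n (m + i) t
      = Real.exp (-t) * ∑' (i) (k), schuetzTerm n (m + i) t k := by
        simp only [schuetzF_eq_exp_mul_tsum, tsum_mul_left]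
    _ = Real.exp (-t) * ∑' j, ∑ p ∈ antidiagonal j, schuetzTerm n (m + p.1) t p.2 := by
        rw [← hsum.tsum_prod, hsum.hasSum.sum_antidiagonal.tsum_eq]
    _ = schuetzF (n + 1) m t := by
        simp only [sum_antidiagonal_schuetzTerm, schuetzF_eq_exp_mul_tsum, Int.cast_add,
          Int.cast_one]

/-- `∑_{l=m}^∞ F_n(l;t) = F_{n+1}(m;t)`. -/
theorem tsum_schuetzF (n : ℤ) (m : ℕ) (t : ℝ) (ht : 0 ≤ t) :
    ∑' i : ℕ, schuetzF n (m + i) t = schuetzF (n + 1) m t :=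
  tsum_schuetzF_general n m t
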